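/- Let φ, ψ be scale functions with LU doubling bounds, and φ̄(λ) := ∫₀^∞ (1 - e^{-λ t})/(t ψ(φ⁻¹(t))) dt (assumed finite). For r ≤ 1 suppose φ_c(r) ≤ φ_j(r) with φ = φ_c ∧ φ_j, and define the truncated Bernstein function φ^W(λ; r) := ∫₀^{φ(r)} (1 - e^{-λ t})/(t ψ(φ⁻¹(t))) dt. Then there exists C > 0 such that for all r ≤ 1, φ̄(φ_j(r)⁻¹) ≤ φ^W(φ_j(r)⁻¹; r) + C/ψ(r). -/

import Mathlib

open Real Set MeasureTheory

/-- A scale function satisfying `LU(α₁, α₂)`. -/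
def LU (α₁ α₂ : ℝ) (ψ : ℝ → ℝ) : Prop :=
  ContinuousOn ψ (Ici 0) ∧ StrictMonoOn ψ (Ici 0) ∧ ψ 0 = 0 ∧ ψ 1 = 1 ∧
    ∃ C : ℝ, 1 ≤ C ∧ ∀ r R : ℝ, 0 < r → r ≤ R →
      C⁻¹ * (R / r) ^ α₁ ≤ ψ R / ψ r ∧ ψ R / ψ r ≤ C * (R / r) ^ α₂

/-! Split the integral at `φ r`, where `φ = φ_c ∧ φ_j` is again a scale function, and bound
`1 - e^{-λt}` by `1` past `φ r`. Since `φ` has upper exponent `β₂` and `ψ` has lower exponent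
`γ₁`, the function `ψ ∘ φ⁻¹` grows at least like `t ^ (γ₁ / β₂)` relative to its value `ψ r` at
`φ r`, so past `φ r` the integrand is dominated by a multiple of `(φ r) ^ ε t ^ (-1 - ε) / ψ r`
with `ε = γ₁ / β₂`, whose integral over `(φ r, ∞)` is `C / ψ r`. The estimate is uniform in
`λ ≥ 0`. -/

open Filter

theorem one_sub_exp_neg_mul_le {c t : ℝ} (ht : 0 ≤ t) :
    1 - exp (-c * t) ≤ max 1 c * min 1 t := by
  rcases le_total t 1 with ht1 | ht1
  · have := add_one_le_exp (-c * t)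
    rw [min_eq_right ht1]
    nlinarith [le_max_right 1 c]
  · rw [min_eq_left ht1, mul_one]
    linarith [exp_pos (-c * t), le_max_left 1 c]

theorem integrableOn_one_sub_exp_div {g : ℝ → ℝ} {c : ℝ} (hc : 0 ≤ c)
    (hg : MonotoneOn g (Ioi 0)) (hg0 : ∀ t, 0 < t → 0 ≤ g t)
    (hint : IntegrableOn (fun t => min 1 t / (t * g t)) (Ioi 0)) :
    IntegrableOn (fun t => (1 - exp (-c * t)) / (t * g t)) (Ioi 0) := by
  have hmeas : AEStronglyMeasurable (fun t => (1 - exp (-c * t)) / (t * g t))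
      (volume.restrict (Ioi 0)) :=
    ((by fun_prop : Measurable fun t => 1 - exp (-c * t)).aemeasurable.div
      (measurable_id.aemeasurable.mul
        (aemeasurable_restrict_of_monotoneOn measurableSet_Ioi hg))).aestronglyMeasurable
  refine (hint.const_mul (max 1 c)).mono' hmeas ((ae_restrict_iff' measurableSet_Ioi).2
    (.of_forall fun t (ht : 0 < t) => ?_))
  have hden : 0 ≤ t * g t := mul_nonneg ht.le (hg0 t ht)
  have hnum : 0 ≤ 1 - exp (-c * t) := by
    linarith [exp_le_one_iff.2 (by nlinarith : -c * t ≤ 0)]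
  rw [norm_of_nonneg (div_nonneg hnum hden), mul_div_assoc']
  exact div_le_div_of_nonneg_right (one_sub_exp_neg_mul_le ht.le) hden

theorem setIntegral_Ioi_div_mul_le {f g : ℝ → ℝ} {a c ε : ℝ} (ha : 0 < a) (hc : 0 < c)
    (hε : 0 < ε) (hga : 0 < g a) (hg : ∀ t, a ≤ t → c * (t / a) ^ ε * g a ≤ g t)
    (hf : ∀ t, a < t → 0 ≤ f t ∧ f t ≤ 1) :
    ∫ t in Ioi a, f t / (t * g t) ≤ 1 / (c * ε * g a) := by
  have hbound : ∀ t ∈ Ioi a, f t / (t * g t) ≤ a ^ ε / (c * g a) * t ^ (-1 - ε) := by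
    intro t (ht : a < t)
    have ht0 := ha.trans ht
    calc f t / (t * g t) ≤ 1 / (t * (c * (t / a) ^ ε * g a)) := by
          gcongr
          exacts [(hf t ht).2, hg t ht.le]
      _ = a ^ ε / (c * g a) * t ^ (-1 - ε) := by
          rw [show -1 - ε = -(1 + ε) by ring, rpow_neg ht0.le, rpow_add ht0, rpow_one,
            div_rpow ht0.le ha.le]
          field_simp
  have hnonneg : ∀ t ∈ Ioi a, 0 ≤ f t / (t * g t) := by
    intro t (ht : a < t)
    have ht0 := ha.trans ht
    have hgt : 0 ≤ g t := le_trans (by positivity) (hg t ht.le)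
    exact div_nonneg (hf t ht).1 (mul_nonneg ht0.le hgt)
  calc ∫ t in Ioi a, f t / (t * g t) ≤ ∫ t in Ioi a, a ^ ε / (c * g a) * t ^ (-1 - ε) :=
        integral_mono_of_nonneg ((ae_restrict_iff' measurableSet_Ioi).2 (.of_forall hnonneg))
          ((integrableOn_Ioi_rpow_of_lt (by linarith) ha).const_mul _)
          ((ae_restrict_iff' measurableSet_Ioi).2 (.of_forall hbound))
    _ = 1 / (c * ε * g a) := by
        rw [integral_const_mul, integral_Ioi_rpow_of_lt (by linarith) ha,
          show -1 - ε + 1 = -ε by ring, rpow_neg ha.le]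
        field_simp

namespace LU

variable {α₁ α₂ β₁ β₂ γ₁ γ₂ : ℝ} {φ φinv ψ : ℝ → ℝ}

theorem pos (h : LU α₁ α₂ ψ) {x : ℝ} (hx : 0 < x) : 0 < ψ x := by
  simpa [h.2.2.1] using h.2.1 self_mem_Ici hx.le hx

theorem exists_scaling (h : LU α₁ α₂ ψ) : ∃ C : ℝ, 1 ≤ C ∧ ∀ r R : ℝ, 0 < r → r ≤ R →
    C⁻¹ * (R / r) ^ α₁ * ψ r ≤ ψ R ∧ ψ R ≤ C * (R / r) ^ α₂ * ψ r := by
  obtain ⟨C, hC, hscale⟩ := h.2.2.2.2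
  refine ⟨C, hC, fun r R hr hrR => ?_⟩
  obtain ⟨hlower, hupper⟩ := hscale r R hr hrR
  exact ⟨(le_div_iff₀ (h.pos hr)).1 hlower, (div_le_iff₀ (h.pos hr)).1 hupper⟩

theorem inf (hψ : LU α₁ α₂ ψ) (hφ : LU β₁ β₂ φ) :
    LU (min α₁ β₁) (max α₂ β₂) (fun x => min (ψ x) (φ x)) := by
  obtain ⟨Cψ, hCψ, hψs⟩ := hψ.exists_scaling
  obtain ⟨Cφ, hCφ, hφs⟩ := hφ.exists_scaling
  refine ⟨hψ.1.inf hφ.1, fun x hx y hy hxy => min_lt_min (hψ.2.1 hx hy hxy) (hφ.2.1 hx hy hxy),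
    by simp [hψ.2.2.1, hφ.2.2.1], by simp [hψ.2.2.2.1, hφ.2.2.2.1],
    max Cψ Cφ, le_max_of_le_left hCψ, fun r R hr hrR => ?_⟩
  have hq : 1 ≤ R / r := (one_le_div hr).2 hrR
  have hmin : 0 < min (ψ r) (φ r) := lt_min (hψ.pos hr) (hφ.pos hr)
  rw [le_div_iff₀ hmin, div_le_iff₀ hmin]
  dsimp only
  refine ⟨(mul_min_of_nonneg _ _ (by positivity)).trans_le
      (le_min ((min_le_left _ _).trans (le_trans ?_ (hψs r R hr hrR).1))
        ((min_le_right _ _).trans (le_trans ?_ (hφs r R hr hrR).1))),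
    (min_le_min ((hψs r R hr hrR).2.trans ?_) ((hφs r R hr hrR).2.trans ?_)).trans_eq
      (mul_min_of_nonneg _ _ (by positivity)).symm⟩
  all_goals gcongr
  all_goals first
    | exact (hψ.pos hr).le | exact (hφ.pos hr).le
    | exact le_max_left _ _ | exact le_max_right _ _
    | exact min_le_left _ _ | exact min_le_right _ _

theorem tendsto_atTop (h : LU α₁ α₂ ψ) (hα₁ : 0 < α₁) : Tendsto ψ atTop atTop := by
  obtain ⟨C, hC, hscale⟩ := h.exists_scaling
  refine tendsto_atTop_mono' _ ?_
    ((tendsto_rpow_atTop hα₁).const_mul_atTop (by positivity : 0 < C⁻¹))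
  filter_upwards [eventually_ge_atTop 1] with R hR
  simpa [h.2.2.2.1] using (hscale 1 R one_pos hR).1

theorem surjOn_Ici (h : LU α₁ α₂ ψ) (hα₁ : 0 < α₁) : SurjOn ψ (Ici 0) (Ici 0) := by
  simpa [SurjOn, h.2.2.1] using intermediate_value_Ici h.1 (h.tendsto_atTop hα₁)

theorem mapsTo_Ici_of_invOn (hφ : LU β₁ β₂ φ) (hβ₁ : 0 < β₁)
    (hinv : InvOn φinv φ (Ici 0) (Ici 0)) : MapsTo φinv (Ici 0) (Ici 0) :=
  hinv.1.mapsTo (hφ.surjOn_Ici hβ₁)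

theorem monotoneOn_of_invOn (hφ : LU β₁ β₂ φ) (hβ₁ : 0 < β₁)
    (hinv : InvOn φinv φ (Ici 0) (Ici 0)) : MonotoneOn φinv (Ici 0) := by
  intro s hs t ht hst
  have hmaps := hφ.mapsTo_Ici_of_invOn hβ₁ hinv
  rwa [← hφ.2.1.le_iff_le (hmaps hs) (hmaps ht), hinv.2 hs, hinv.2 ht]

theorem pos_of_invOn (hφ : LU β₁ β₂ φ) (hβ₁ : 0 < β₁)
    (hinv : InvOn φinv φ (Ici 0) (Ici 0)) {t : ℝ} (ht : 0 < t) : 0 < φinv t := by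
  refine (hφ.mapsTo_Ici_of_invOn hβ₁ hinv ht.le).lt_of_ne fun h => ht.ne ?_
  rw [← hinv.2 ht.le, ← h, hφ.2.2.1]

theorem exists_lowerScaling_comp_inv (hφ : LU β₁ β₂ φ) (hβ₁ : 0 < β₁) (hβ₂ : 0 < β₂)
    (hψ : LU γ₁ γ₂ ψ) (hγ₁ : 0 ≤ γ₁) (hinv : InvOn φinv φ (Ici 0) (Ici 0)) :
    ∃ c : ℝ, 0 < c ∧ ∀ s t : ℝ, 0 < s → s ≤ t →
      c * (t / s) ^ (γ₁ / β₂) * ψ (φinv s) ≤ ψ (φinv t) := by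
  obtain ⟨Cφ, hCφ, hφs⟩ := hφ.exists_scaling
  obtain ⟨Cψ, hCψ, hψs⟩ := hψ.exists_scaling
  set ε := γ₁ / β₂
  refine ⟨Cψ⁻¹ * (Cφ ^ ε)⁻¹, by positivity, fun s t hs hst => ?_⟩
  have ht := hs.trans_le hst
  have hx := hφ.pos_of_invOn hβ₁ hinv hs
  have hxy : φinv s ≤ φinv t := hφ.monotoneOn_of_invOn hβ₁ hinv hs.le ht.le hst
  have hy := hx.trans_le hxy
  have hratio : t / s ≤ Cφ * (φinv t / φinv s) ^ β₂ := by
    have := (hφs _ _ hx hxy).2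
    rwa [hinv.2 hs.le, hinv.2 ht.le, ← div_le_iff₀ hs] at this
  have hpow : (t / s) ^ ε ≤ Cφ ^ ε * (φinv t / φinv s) ^ γ₁ := by
    calc (t / s) ^ ε ≤ (Cφ * (φinv t / φinv s) ^ β₂) ^ ε := by gcongr
      _ = Cφ ^ ε * (φinv t / φinv s) ^ γ₁ := by
        rw [mul_rpow (by linarith) (by positivity), ← rpow_mul (by positivity),
          mul_div_cancel₀ _ hβ₂.ne']
  calc Cψ⁻¹ * (Cφ ^ ε)⁻¹ * (t / s) ^ ε * ψ (φinv s)
      ≤ Cψ⁻¹ * (Cφ ^ ε)⁻¹ * (Cφ ^ ε * (φinv t / φinv s) ^ γ₁) * ψ (φinv s) := by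
        gcongr
        exact (hψ.pos hx).le
    _ = Cψ⁻¹ * (φinv t / φinv s) ^ γ₁ * ψ (φinv s) := by
        field_simp
    _ ≤ ψ (φinv t) := (hψs _ _ hx hxy).1

theorem exists_integral_Ioi_le_integral_Ioc_add (hφ : LU β₁ β₂ φ) (hβ₁ : 0 < β₁)
    (hβ₂ : 0 < β₂) (hψ : LU γ₁ γ₂ ψ) (hγ₁ : 0 < γ₁) (hinv : InvOn φinv φ (Ici 0) (Ici 0))
    (hint : IntegrableOn (fun t => min 1 t / (t * ψ (φinv t))) (Ioi 0)) :
    ∃ C : ℝ, 0 < C ∧ ∀ r c : ℝ, 0 < r → 0 ≤ c →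
      (∫ t in Ioi 0, (1 - exp (-c * t)) / (t * ψ (φinv t))) ≤
        (∫ t in Ioc 0 (φ r), (1 - exp (-c * t)) / (t * ψ (φinv t))) + C / ψ r := by
  obtain ⟨k, hk, hscale⟩ := hφ.exists_lowerScaling_comp_inv hβ₁ hβ₂ hψ hγ₁.le hinv
  have hε : 0 < γ₁ / β₂ := div_pos hγ₁ hβ₂
  refine ⟨1 / (k * (γ₁ / β₂)), by positivity, fun r c hr hc => ?_⟩
  have ha := hφ.pos hr
  have hmono : MonotoneOn (fun t => ψ (φinv t)) (Ioi 0) :=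
    (hψ.2.1.monotoneOn.comp (hφ.monotoneOn_of_invOn hβ₁ hinv)
      (hφ.mapsTo_Ici_of_invOn hβ₁ hinv)).mono Ioi_subset_Ici_self
  have hF := integrableOn_one_sub_exp_div hc hmono
    (fun t ht => (hψ.pos (hφ.pos_of_invOn hβ₁ hinv ht)).le) hint
  rw [← Ioc_union_Ioi_eq_Ioi ha.le, setIntegral_union (Ioc_disjoint_Ioi le_rfl) measurableSet_Ioi
    (hF.mono_set Ioc_subset_Ioi_self) (hF.mono_set (Ioi_subset_Ioi ha.le))]
  gcongr
  have htail := setIntegral_Ioi_div_mul_le (f := fun t => 1 - exp (-c * t))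
    (g := fun t => ψ (φinv t)) ha hk hε (by rw [hinv.1 hr.le]; exact hψ.pos hr)
    (fun t ht => hscale _ _ ha ht) fun t ht =>
      ⟨by linarith [exp_le_one_iff.2 (by nlinarith : -c * t ≤ 0)], by linarith [exp_pos (-c * t)]⟩
  rwa [hinv.1 hr.le, ← div_div] at htail

end LU

theorem stmt_11_general (β₁c β₂c β₁j β₂j γ₁ γ₂ : ℝ)
    (h1c : 0 < β₁c) (hc : β₁c ≤ β₂c) (h1j : 0 < β₁j)
    (hγ₁ : 0 < γ₁)
    (φc φj ψ φinv : ℝ → ℝ) (hφc : LU β₁c β₂c φc) (hφj : LU β₁j β₂j φj)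
    (hψ : LU γ₁ γ₂ ψ)
    (hinv₁ : ∀ r : ℝ, 0 ≤ r → φinv (min (φc r) (φj r)) = r)
    (hinv₂ : ∀ t : ℝ, 0 ≤ t → min (φc (φinv t)) (φj (φinv t)) = t)
    (hint : IntegrableOn (fun t => min 1 t / (t * ψ (φinv t))) (Ioi (0 : ℝ))) :
    ∃ C : ℝ, 0 < C ∧ ∀ r : ℝ, 0 < r → r ≤ 1 →
      (∫ t in Ioi (0 : ℝ), (1 - Real.exp (-(φj r)⁻¹ * t)) / (t * ψ (φinv t))) ≤
        (∫ t in Ioc (0 : ℝ) (min (φc r) (φj r)),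
            (1 - Real.exp (-(φj r)⁻¹ * t)) / (t * ψ (φinv t))) + C / ψ r := by
  obtain ⟨C, hC, hsplit⟩ := (hφc.inf hφj).exists_integral_Ioi_le_integral_Ioc_add
    (lt_min h1c h1j) (lt_max_of_lt_left (h1c.trans_le hc)) hψ hγ₁
    ⟨fun r hr => hinv₁ r hr, fun t ht => hinv₂ t ht⟩ hint
  exact ⟨C, hC, fun r hr _ => hsplit r _ hr (inv_nonneg.2 (hφj.pos hr).le)⟩

theorem stmt_11 (β₁c β₂c β₁j β₂j γ₁ γ₂ : ℝ)
    (h1c : 0 < β₁c) (hc : β₁c ≤ β₂c) (h1j : 0 < β₁j) (hj : β₁j ≤ β₂j)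
    (hγ₁ : 0 < γ₁) (hγ : γ₁ ≤ γ₂)
    (φc φj ψ φinv : ℝ → ℝ) (hφc : LU β₁c β₂c φc) (hφj : LU β₁j β₂j φj)
    (hψ : LU γ₁ γ₂ ψ)
    (hcj : ∀ r : ℝ, 0 < r → r ≤ 1 → φc r ≤ φj r)
    (hinv₁ : ∀ r : ℝ, 0 ≤ r → φinv (min (φc r) (φj r)) = r)
    (hinv₂ : ∀ t : ℝ, 0 ≤ t → min (φc (φinv t)) (φj (φinv t)) = t)
    (hint : IntegrableOn (fun t => min 1 t / (t * ψ (φinv t))) (Ioi (0 : ℝ))) :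
    ∃ C : ℝ, 0 < C ∧ ∀ r : ℝ, 0 < r → r ≤ 1 →
      (∫ t in Ioi (0 : ℝ), (1 - Real.exp (-(φj r)⁻¹ * t)) / (t * ψ (φinv t))) ≤
        (∫ t in Ioc (0 : ℝ) (min (φc r) (φj r)),
            (1 - Real.exp (-(φj r)⁻¹ * t)) / (t * ψ (φinv t))) + C / ψ r :=
  stmt_11_general β₁c β₂c β₁j β₂j γ₁ γ₂ h1c hc h1j hγ₁ φc φj ψ φinv hφc hφj hψ hinv₁ hinv₂ hint
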